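/- For σ > 0, γ > 0 and every natural number n, the even moments of the Dual Voigt(γ, σ²) distribution equal the corresponding moments of the N(−γ/σ², 1/σ²) distribution truncated below at 0: ∫_ℝ u^{2n} p'(u) du = ∫_0^∞ u^{2n} · [1/(1 − Φ(γ/σ))] · (σ/√(2π)) · e^{−(σ²/2)(u + γ/σ²)²} du, and both integrals are finite. -/

import Mathlib

/-!
Completing the square turns `e^{-γ²/(2σ²)} e^{-γ|u| - σ²u²/2}` into
`e^{-(σ²/2)(|u| + γ/σ²)²}`, so the Dual Voigt density is half the truncated normal density
evaluated at `|u|`. Since `u ↦ u^{2n}` is even, the moment integral over `ℝ` is twice the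
integral over `(0, ∞)`. Finiteness comes from `(u + γ/σ²)² ≥ u²` for `u, γ ≥ 0`, which bounds
the truncated normal integrand by a Gaussian moment.
-/

open MeasureTheory ProbabilityTheory Real

/-- The standard normal cumulative distribution function. -/
noncomputable def stdNormalCDF (t : ℝ) : ℝ :=
  ∫ s in Set.Iic t, (1 / Real.sqrt (2 * π)) * Real.exp (-s ^ 2 / 2)

/-- The Dual Voigt(γ, σ²) density. -/
noncomputable def dualVoigtDensity (σ γ : ℝ) (u : ℝ) : ℝ :=
  1 / (2 * (1 - stdNormalCDF (γ / σ))) * (σ / Real.sqrt (2 * π)) *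
    Real.exp (-γ ^ 2 / (2 * σ ^ 2)) * Real.exp (-γ * |u| - σ ^ 2 * u ^ 2 / 2)

open Set

theorem MeasureTheory.IntegrableOn.comp_abs {E : Type*} [NormedAddCommGroup E] {f : ℝ → E}
    (hf : IntegrableOn f (Ioi 0)) : Integrable (fun x => f |x|) := by
  have h_pos : IntegrableOn (fun x => f |x|) (Ioi 0) :=
    hf.congr_fun (fun x hx => by rw [abs_of_pos hx]) measurableSet_Ioi
  have h_neg : IntegrableOn (fun x => f |x|) (Iic 0) := by
    rw [← (Measure.measurePreserving_neg (volume : Measure ℝ)).integrableOn_comp_preimage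
      (Homeomorph.neg ℝ).measurableEmbedding]
    simp only [Function.comp_def, abs_neg, neg_preimage, neg_Iic, neg_zero]
    exact Iff.mpr integrableOn_Ici_iff_integrableOn_Ioi h_pos
  rw [← integrableOn_univ, ← Iic_union_Ioi (a := (0 : ℝ))]
  exact h_neg.union h_pos

theorem integrableOn_Ioi_pow_mul_exp_neg_mul_add_sq {b c : ℝ} (hb : 0 < b) (hc : 0 ≤ c)
    (k : ℕ) : IntegrableOn (fun x : ℝ => x ^ k * exp (-b * (x + c) ^ 2)) (Ioi 0) := by
  have h_gauss : IntegrableOn (fun x : ℝ => x ^ k * exp (-b * x ^ 2)) (Ioi 0) := by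
    simpa only [rpow_natCast] using
      integrableOn_rpow_mul_exp_neg_mul_sq hb (s := k) (by linarith [k.cast_nonneg (α := ℝ)])
  refine h_gauss.mono' (by fun_prop) ?_
  filter_upwards [ae_restrict_mem measurableSet_Ioi] with x (hx : 0 < x)
  rw [norm_mul, norm_of_nonneg (pow_nonneg hx.le k), norm_of_nonneg (exp_pos _).le]
  have h_sq : x ^ 2 ≤ (x + c) ^ 2 := by nlinarith
  exact mul_le_mul_of_nonneg_left (exp_le_exp.mpr (by nlinarith)) (pow_nonneg hx.le k)

theorem exp_neg_mul_add_div_sq {σ : ℝ} (hσ : σ ≠ 0) (γ u : ℝ) :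
    exp (-(σ ^ 2 / 2) * (u + γ / σ ^ 2) ^ 2) =
      exp (-γ ^ 2 / (2 * σ ^ 2)) * exp (-γ * u - σ ^ 2 * u ^ 2 / 2) := by
  rw [← exp_add]
  congr 1
  field_simp
  ring

noncomputable def truncNormalDensity (σ γ : ℝ) (u : ℝ) : ℝ :=
  1 / (1 - stdNormalCDF (γ / σ)) * (σ / Real.sqrt (2 * π)) *
    Real.exp (-(σ ^ 2 / 2) * (u + γ / σ ^ 2) ^ 2)

theorem dualVoigtDensity_eq_half_truncNormalDensity_abs {σ : ℝ} (hσ : σ ≠ 0) (γ u : ℝ) :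
    dualVoigtDensity σ γ u = truncNormalDensity σ γ |u| / 2 := by
  rw [truncNormalDensity, exp_neg_mul_add_div_sq hσ, sq_abs, dualVoigtDensity, mul_comm 2,
    ← div_div]
  ring

theorem integrableOn_Ioi_pow_mul_truncNormalDensity {σ γ : ℝ} (hσ : σ ≠ 0) (hγ : 0 ≤ γ)
    (k : ℕ) : IntegrableOn (fun u => u ^ k * truncNormalDensity σ γ u) (Ioi 0) := by
  refine IntegrableOn.congr_fun
    ((integrableOn_Ioi_pow_mul_exp_neg_mul_add_sq (b := σ ^ 2 / 2) (c := γ / σ ^ 2)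
      (by positivity) (by positivity) k).const_mul
      (1 / (1 - stdNormalCDF (γ / σ)) * (σ / Real.sqrt (2 * π))))
    (fun u _ => ?_) measurableSet_Ioi
  rw [truncNormalDensity]
  ring

/-- the even moments of the Dual Voigt(γ, σ²) distribution equal the
corresponding moments of the N(−γ/σ², 1/σ²) distribution truncated below at 0, and both
integrals are finite. -/
theorem dualVoigt_even_moments (σ γ : ℝ) (hσ : 0 < σ) (hγ : 0 < γ) (n : ℕ) :
    Integrable (fun u : ℝ => u ^ (2 * n) * dualVoigtDensity σ γ u) ∧
    IntegrableOn (fun u : ℝ => u ^ (2 * n) *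
      (1 / (1 - stdNormalCDF (γ / σ)) * (σ / Real.sqrt (2 * π)) *
        Real.exp (-(σ ^ 2 / 2) * (u + γ / σ ^ 2) ^ 2))) (Set.Ioi 0) ∧
    (∫ u : ℝ, u ^ (2 * n) * dualVoigtDensity σ γ u) =
      ∫ u in Set.Ioi (0 : ℝ), u ^ (2 * n) *
        (1 / (1 - stdNormalCDF (γ / σ)) * (σ / Real.sqrt (2 * π)) *
          Real.exp (-(σ ^ 2 / 2) * (u + γ / σ ^ 2) ^ 2)) := by
  set g : ℝ → ℝ := fun u => u ^ (2 * n) * truncNormalDensity σ γ u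
  have h_even : (fun u : ℝ => u ^ (2 * n) * dualVoigtDensity σ γ u) = fun u => g |u| / 2 := by
    ext u
    rw [dualVoigtDensity_eq_half_truncNormalDensity_abs hσ.ne', pow_mul, ← sq_abs u, ← pow_mul]
    ring
  have hg : IntegrableOn g (Ioi 0) := integrableOn_Ioi_pow_mul_truncNormalDensity hσ.ne' hγ.le _
  refine ⟨?_, hg, ?_⟩
  · rw [h_even]
    exact hg.comp_abs.div_const 2
  · rw [h_even, integral_div, integral_comp_abs, mul_div_cancel_left₀ _ two_ne_zero]
    rfl
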